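/- Let ε ∈ ℂ with ε² + ε + 1 = 0. In S = MvPolynomial (Fin 2) ℂ with variables x, y, the ideal of all polynomials h ∈ S such that eval (fun i => if i = 0 then ε^a else ε^b) h = 0 for all a, b ∈ {0, 1, 2} equals Ideal.span {x³ − 1, y³ − 1}. -/
import Mathlib
open MvPolynomial

private lemma vand3 (ε : ℂ) (hε : ε ^ 2 + ε + 1 = 0) (d : Fin 3 → ℂ)
    (H : ∀ b : Fin 3, ∑ j : Fin 3, d j * (ε ^ (b : ℕ)) ^ (j : ℕ) = 0) :
    ∀ j, d j = 0 := by
  have e0 := H 0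
  have e1 := H 1
  have e2 := H 2
  simp [Fin.sum_univ_three] at e0 e1 e2
  intro j
  fin_cases j
  · show d 0 = 0
    linear_combination (e0 + e1 + e2)/3 - (d 1/3 + d 2*(ε^2 - ε + 1)/3) * hε
  · show d 1 = 0
    linear_combination (e0 + ε^2*e1 + ε*e2)/3
      - (d 0 + 2*(d 1)*(ε-1) + d 2*(2 - ε + (ε-1)*(ε^2+ε+1)))/3 * hε
  · show d 2 = 0
    linear_combination (e0 + ε*e1 + ε^2*e2)/3
      - (d 0 + d 1*(ε^2-ε+1) + d 2*(3*(ε-1)+(ε-1)^2*(ε^2+ε+1)))/3 * hε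

private lemma vand9 (ε : ℂ) (hε : ε ^ 2 + ε + 1 = 0) (c : Fin 3 → Fin 3 → ℂ)
    (H : ∀ a b : Fin 3,
      ∑ i : Fin 3, ∑ j : Fin 3, c i j * (ε ^ (a : ℕ)) ^ (i : ℕ) * (ε ^ (b : ℕ)) ^ (j : ℕ) = 0) :
    ∀ i j, c i j = 0 := by
  have key : ∀ a j : Fin 3, ∑ i : Fin 3, c i j * (ε ^ (a : ℕ)) ^ (i : ℕ) = 0 := by
    intro a
    have H2 : ∀ b : Fin 3,
        ∑ j : Fin 3, (∑ i : Fin 3, c i j * (ε ^ (a : ℕ)) ^ (i : ℕ)) * (ε ^ (b : ℕ)) ^ (j : ℕ)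
          = 0 := by
      intro b
      rw [← H a b, Finset.sum_comm]
      apply Finset.sum_congr rfl
      intro j _
      rw [Finset.sum_mul]
    exact vand3 ε hε _ H2
  intro i j
  exact vand3 ε hε (fun i => c i j) (fun a => key a j) i

private noncomputable def Rpoly (c : Fin 3 → Fin 3 → ℂ) : MvPolynomial (Fin 2) ℂ :=
  ∑ i : Fin 3, ∑ j : Fin 3, C (c i j) * X 0 ^ (i : ℕ) * X 1 ^ (j : ℕ)

private lemma exists_repr (h : MvPolynomial (Fin 2) ℂ) :
    ∃ c : Fin 3 → Fin 3 → ℂ,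
      h - Rpoly c ∈ (Ideal.span {X 0 ^ 3 - 1, X 1 ^ 3 - 1} : Ideal (MvPolynomial (Fin 2) ℂ)) := by
  set I : Ideal (MvPolynomial (Fin 2) ℂ) := Ideal.span {X 0 ^ 3 - 1, X 1 ^ 3 - 1} with hI
  have h1 : (X 0 ^ 3 - 1 : MvPolynomial (Fin 2) ℂ) ∈ I :=
    Ideal.subset_span (by left; rfl)
  have h2 : (X 1 ^ 3 - 1 : MvPolynomial (Fin 2) ℂ) ∈ I :=
    Ideal.subset_span (by right; rfl)
  induction h using MvPolynomial.induction_on with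
  | C a =>
      refine ⟨fun i j => if i = 0 then (if j = 0 then a else 0) else 0, ?_⟩
      have : Rpoly (fun i j => if i = 0 then (if j = 0 then a else 0) else 0) = C a := by
        simp [Rpoly, Fin.sum_univ_three]
      rw [this, sub_self]
      exact I.zero_mem
  | add p q hp hq =>
      obtain ⟨c1, hc1⟩ := hp
      obtain ⟨c2, hc2⟩ := hq
      refine ⟨fun i j => c1 i j + c2 i j, ?_⟩
      have : p + q - Rpoly (fun i j => c1 i j + c2 i j)
          = (p - Rpoly c1) + (q - Rpoly c2) := by
        simp only [Rpoly, Fin.sum_univ_three, map_add]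
        ring
      rw [this]
      exact I.add_mem hc1 hc2
  | mul_X p n hp =>
      obtain ⟨c, hc⟩ := hp
      fin_cases n
      · refine ⟨fun i j => c (i - 1) j, ?_⟩
        have key : p * X 0 - Rpoly (fun i j => c (i - 1) j)
            = (p - Rpoly c) * X 0
              + (X 0 ^ 3 - 1) * (∑ j : Fin 3, C (c 2 j) * X 1 ^ (j : ℕ)) := by
          have s1 : (0 : Fin 3) - 1 = 2 := rfl
          have s2 : (1 : Fin 3) - 1 = 0 := rfl
          have s3 : (2 : Fin 3) - 1 = 1 := rfl
          have v0 : ((0 : Fin 3) : ℕ) = 0 := rfl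
          have v1 : ((1 : Fin 3) : ℕ) = 1 := rfl
          have v2 : ((2 : Fin 3) : ℕ) = 2 := rfl
          simp only [Rpoly, Fin.sum_univ_three, s1, s2, s3, v0, v1, v2]
          ring
        show p * X 0 - Rpoly (fun i j => c (i - 1) j) ∈ I
        rw [key]
        exact I.add_mem (I.mul_mem_right _ hc) (I.mul_mem_right _ h1)
      · refine ⟨fun i j => c i (j - 1), ?_⟩
        have key : p * X 1 - Rpoly (fun i j => c i (j - 1))
            = (p - Rpoly c) * X 1
              + (X 1 ^ 3 - 1) * (∑ i : Fin 3, C (c i 2) * X 0 ^ (i : ℕ)) := by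
          have s1 : (0 : Fin 3) - 1 = 2 := rfl
          have s2 : (1 : Fin 3) - 1 = 0 := rfl
          have s3 : (2 : Fin 3) - 1 = 1 := rfl
          have v0 : ((0 : Fin 3) : ℕ) = 0 := rfl
          have v1 : ((1 : Fin 3) : ℕ) = 1 := rfl
          have v2 : ((2 : Fin 3) : ℕ) = 2 := rfl
          simp only [Rpoly, Fin.sum_univ_three, s1, s2, s3, v0, v1, v2]
          ring
        show p * X 1 - Rpoly (fun i j => c i (j - 1)) ∈ I
        rw [key]
        exact I.add_mem (I.mul_mem_right _ hc) (I.mul_mem_right _ h2)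

theorem affine_ideal_of_nine_points (ε : ℂ) (hε : ε ^ 2 + ε + 1 = 0) :
    {h : MvPolynomial (Fin 2) ℂ |
        ∀ a b : Fin 3,
          eval (fun i : Fin 2 => if i = 0 then ε ^ (a : ℕ) else ε ^ (b : ℕ)) h = 0} =
      ↑(Ideal.span {X 0 ^ 3 - 1, X 1 ^ 3 - 1} : Ideal (MvPolynomial (Fin 2) ℂ)) := by
  have hε3 : ε ^ 3 = 1 := by linear_combination (ε - 1) * hε
  have evalI : ∀ g ∈ (Ideal.span {X 0 ^ 3 - 1, X 1 ^ 3 - 1} :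
      Ideal (MvPolynomial (Fin 2) ℂ)), ∀ a b : Fin 3,
      eval (fun i : Fin 2 => if i = 0 then ε ^ (a : ℕ) else ε ^ (b : ℕ)) g = 0 := by
    intro g hg a b
    rw [Ideal.mem_span_pair] at hg
    obtain ⟨u, v, huv⟩ := hg
    rw [← huv]
    have hx : ((ε ^ (a : ℕ)) ^ 3 : ℂ) = 1 := by
      rw [← pow_mul, mul_comm, pow_mul, hε3, one_pow]
    have hy : ((ε ^ (b : ℕ)) ^ 3 : ℂ) = 1 := by
      rw [← pow_mul, mul_comm, pow_mul, hε3, one_pow]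
    simp [hx, hy]
  ext h
  constructor
  · intro hh
    obtain ⟨c, hc⟩ := exists_repr h
    have hRc : ∀ a b : Fin 3,
        eval (fun i : Fin 2 => if i = 0 then ε ^ (a : ℕ) else ε ^ (b : ℕ)) (Rpoly c) = 0 := by
      intro a b
      have e1 := evalI _ hc a b
      have e2 := hh a b
      have : eval (fun i : Fin 2 => if i = 0 then ε ^ (a : ℕ) else ε ^ (b : ℕ)) (h - Rpoly c)
          = - eval (fun i : Fin 2 => if i = 0 then ε ^ (a : ℕ) else ε ^ (b : ℕ)) (Rpoly c) := by
        rw [map_sub, e2, zero_sub]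
      rw [this] at e1
      exact neg_eq_zero.mp e1
    have hc0 : ∀ i j, c i j = 0 := by
      apply vand9 ε hε
      intro a b
      have := hRc a b
      rw [← this]
      simp [Rpoly, map_sum]
    have hR0 : Rpoly c = 0 := by
      simp [Rpoly, Fin.sum_univ_three, hc0]
    rw [hR0, sub_zero] at hc
    exact hc
  · intro hh
    exact evalI h hh
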